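/- Let 1̃{a < b} = (1/2)(1 + erf((b-a)/(√2 r))) be the Gaussian-smoothed indicator with smoothing parameter r > 0, where erf(x) = (2/√π)∫₀ˣ e^{-t²} dt. Then for any fixed b ∈ ℝ, ∫_{-∞}^{∞} |1̃{a < b} - 1{a < b}| da = r·√(2/π). -/

import Mathlib

/-!
With `G x = ∫_x^∞ e^{-t²} dt`, the error of the smoothed indicator at `y = (b - a)/(√2 r)` is
`G |y| / √π` on both sides of the jump. Integrating by parts,
`∫_0^∞ G = ∫_0^∞ x e^{-x²} dx = 1/2`, so `∫ G |y| dy = 1`, and the substitution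
`a ↦ (b - a)/(√2 r)` contributes the factor `√2 r`.
-/

noncomputable def erf (x : ℝ) : ℝ :=
  (2 / Real.sqrt Real.pi) * ∫ t in (0:ℝ)..x, Real.exp (-t ^ 2)

open MeasureTheory Real Set Filter Topology

noncomputable def gaussianTail (x : ℝ) : ℝ := ∫ t in Ioi x, exp (-t ^ 2)

lemma integrable_exp_neg_sq : Integrable fun t : ℝ => exp (-t ^ 2) := by
  simpa using integrable_exp_neg_mul_sq one_pos

lemma gaussianTail_eq_sub_intervalIntegral (x : ℝ) :
    gaussianTail x = √π / 2 - ∫ t in (0:ℝ)..x, exp (-t ^ 2) := by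
  have hsplit := intervalIntegral.integral_interval_add_Ioi (a := 0) (b := x)
    integrable_exp_neg_sq.integrableOn integrable_exp_neg_sq.integrableOn
  have hhalf : ∫ t in Ioi (0:ℝ), exp (-t ^ 2) = √π / 2 := by
    simpa using integral_gaussian_Ioi 1
  rw [gaussianTail]
  linarith

lemma gaussianTail_nonneg (x : ℝ) : 0 ≤ gaussianTail x :=
  setIntegral_nonneg measurableSet_Ioi fun _ _ => (exp_pos _).le

lemma hasDerivAt_gaussianTail (x : ℝ) : HasDerivAt gaussianTail (-exp (-x ^ 2)) x := by
  have hprim : HasDerivAt (fun y => ∫ t in (0:ℝ)..y, exp (-t ^ 2)) (exp (-x ^ 2)) x :=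
    intervalIntegral.integral_hasDerivAt_right integrable_exp_neg_sq.intervalIntegrable
      ((by fun_prop : Continuous fun t : ℝ => exp (-t ^ 2)).stronglyMeasurableAtFilter _ _)
      (by fun_prop)
  rw [funext gaussianTail_eq_sub_intervalIntegral]
  exact hprim.const_sub _

lemma gaussianTail_le (x : ℝ) : gaussianTail x ≤ exp (1 / 4) * exp (-x) := by
  have hpt (t : ℝ) : exp (-t ^ 2) ≤ exp (1 / 4) * exp (-t) := by
    rw [← exp_add, exp_le_exp]
    nlinarith [sq_nonneg (t - 1 / 2)]
  calc gaussianTail x ≤ ∫ t in Ioi x, exp (1 / 4) * exp (-t) :=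
        setIntegral_mono_on integrable_exp_neg_sq.integrableOn
          (by simpa [IntegrableOn] using
            (exp_neg_integrableOn_Ioi x one_pos).const_mul (exp (1 / 4)))
          measurableSet_Ioi fun t _ => hpt t
    _ = exp (1 / 4) * exp (-x) := by rw [integral_const_mul, integral_exp_neg_Ioi]

lemma tendsto_mul_gaussianTail_atTop : Tendsto (fun x => x * gaussianTail x) atTop (𝓝 0) := by
  have hbound : Tendsto (fun x : ℝ => exp (1 / 4) * (x ^ 1 * exp (-x))) atTop (𝓝 0) := by
    simpa using (tendsto_pow_mul_exp_neg_atTop_nhds_zero 1).const_mul (exp (1 / 4))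
  refine tendsto_of_tendsto_of_tendsto_of_le_of_le' tendsto_const_nhds hbound ?_ ?_ <;>
    filter_upwards [eventually_ge_atTop 0] with x hx
  · exact mul_nonneg hx (gaussianTail_nonneg x)
  · calc x * gaussianTail x ≤ x * (exp (1 / 4) * exp (-x)) :=
          mul_le_mul_of_nonneg_left (gaussianTail_le x) hx
      _ = exp (1 / 4) * (x ^ 1 * exp (-x)) := by ring

lemma tendsto_exp_neg_sq_atTop : Tendsto (fun x : ℝ => exp (-x ^ 2)) atTop (𝓝 0) :=
  tendsto_exp_atBot.comp <| tendsto_neg_atTop_atBot.comp <| tendsto_pow_atTop two_ne_zero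

lemma integral_gaussianTail_Ioi_zero : ∫ x in Ioi 0, gaussianTail x = 1 / 2 := by
  have hderiv (x : ℝ) (_ : x ∈ Ici 0) :
      HasDerivAt (fun x => x * gaussianTail x - exp (-x ^ 2) / 2) (gaussianTail x) x := by
    refine (((hasDerivAt_id' x).mul (hasDerivAt_gaussianTail x)).sub
      ((hasDerivAt_pow 2 x).neg.exp.div_const 2)).congr_deriv ?_
    simp only [Pi.neg_apply, Nat.cast_ofNat]
    ring
  have hlim := tendsto_mul_gaussianTail_atTop.sub (tendsto_exp_neg_sq_atTop.div_const 2)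
  rw [integral_Ioi_of_hasDerivAt_of_nonneg' hderiv (fun x _ => gaussianTail_nonneg x)
    (by simpa using hlim)]
  norm_num

lemma integral_gaussianTail_abs_div (c : ℝ) : ∫ u, gaussianTail |u / c| = |c| := by
  rw [Measure.integral_comp_div (fun y => gaussianTail |y|), integral_comp_abs,
    integral_gaussianTail_Ioi_zero, smul_eq_mul]
  ring

lemma erf_neg (y : ℝ) : erf (-y) = -erf y := by
  have hodd : ∫ t in (0:ℝ)..-y, exp (-t ^ 2) = -∫ t in (0:ℝ)..y, exp (-t ^ 2) := by
    rw [intervalIntegral.integral_symm, ← neg_zero,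
      ← intervalIntegral.integral_comp_neg (fun t => exp (-t ^ 2))]
    simp only [neg_sq, neg_zero]
  rw [erf, erf, hodd]
  ring

lemma one_sub_erf (y : ℝ) : 1 - erf y = 2 / √π * gaussianTail y := by
  have hπ : √π ≠ 0 := (sqrt_pos.2 pi_pos).ne'
  rw [erf, gaussianTail_eq_sub_intervalIntegral]
  field_simp

lemma abs_smoothedIndicator_sub_indicator (y : ℝ) :
    |(1 / 2) * (1 + erf y) - (if 0 < y then (1:ℝ) else 0)| = gaussianTail |y| / √π := by
  have herr_nonneg (x : ℝ) : 0 ≤ gaussianTail x / √π :=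
    div_nonneg (gaussianTail_nonneg x) (sqrt_nonneg _)
  by_cases hy : 0 < y
  · have hval : (1 / 2) * (1 + erf y) - 1 = -(gaussianTail y / √π) := by
      linear_combination (-1 / 2) * one_sub_erf y
    rw [if_pos hy, abs_of_pos hy, hval, abs_neg, abs_of_nonneg (herr_nonneg y)]
  · have h := one_sub_erf (-y)
    rw [erf_neg] at h
    have hval : (1 / 2) * (1 + erf y) - 0 = gaussianTail (-y) / √π := by
      linear_combination (1 / 2) * h
    rw [if_neg hy, abs_of_nonpos (not_lt.1 hy), hval, abs_of_nonneg (herr_nonneg (-y))]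

/-- The total (Lebesgue) integral of the absolute error between the
Gaussian-smoothed indicator `1̃{a < b} = (1/2)(1 + erf((b-a)/(√2 r)))` and the indicator
`1{a < b}` equals `r·√(2/π)`. -/
theorem stmt8 (r : ℝ) (hr : 0 < r) (b : ℝ) :
    ∫ a : ℝ,
        |(1 / 2) * (1 + erf ((b - a) / (Real.sqrt 2 * r)))
          - (if a < b then (1:ℝ) else 0)|
      = r * Real.sqrt (2 / Real.pi) := by
  set c := √2 * r
  have hc : 0 < c := by positivity
  have hjump (a : ℝ) : a < b ↔ 0 < (b - a) / c := by rw [div_pos_iff_of_pos_right hc, sub_pos]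
  calc ∫ a, |(1 / 2) * (1 + erf ((b - a) / c)) - (if a < b then (1:ℝ) else 0)|
      = ∫ a, gaussianTail |(b - a) / c| / √π := by
        congr 1 with a
        simp only [hjump a, abs_smoothedIndicator_sub_indicator]
    _ = (∫ u, gaussianTail |u / c|) / √π := by
        rw [integral_div, integral_sub_left_eq_self (fun u => gaussianTail |u / c|)]
    _ = r * √(2 / π) := by
        rw [integral_gaussianTail_abs_div, abs_of_pos hc, sqrt_div zero_le_two]
        ring
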